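/- arXiv:2312.10710 — 2 statements merged into one kernel-verified Lean document; each statement's English description precedes it below -/
import Mathlib

section
/- For real parameters θ¹, θ² with θ¹+θ² > 0 and θ¹−θ² > 0, the mean of the beta-logistic distribution is ∫_{ℝ} x · p(x;θ¹,θ²) dx = (1/2)·(ψ((θ¹+θ²)/2) − ψ((θ¹−θ²)/2)). -/
open MeasureTheory

/-- The hyperbolic secant function: `sech x = 2 / (eˣ + e⁻ˣ)`. -/
noncomputable def sech (x : ℝ) : ℝ := 1 / Real.cosh x

/-- The beta-logistic density. -/
noncomputable def betaLogisticPDF (θ1 θ2 x : ℝ) : ℝ :=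
  (2 : ℝ) ^ (1 - θ1) * sech x ^ θ1 * Real.exp (θ2 * x) /
    (Real.Gamma ((θ1 - θ2) / 2) * Real.Gamma ((θ1 + θ2) / 2) / Real.Gamma θ1)

/-- The digamma function `ψ(z) = d/dz log Γ(z)`. -/
noncomputable def digamma (z : ℝ) : ℝ := deriv (fun x => Real.log (Real.Gamma x)) z

/-!
The substitution `t = sigmoid (2 x) = eˣ / (2 cosh x)` maps `ℝ` onto `(0, 1)` and turns
`sech x ^ θ * exp (s x) dx` into `2 ^ (1 - θ) t ^ ((θ + s)/2 - 1) (1 - t) ^ ((θ - s)/2 - 1) dt`, so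
`M s = ∫ sech x ^ θ * exp (s x) dx = 2 ^ (θ - 1) B((θ + s)/2, (θ - s)/2)` for `|s| < θ`.
Since `M` is the moment generating function of the measure `sech x ^ θ dx`, it may be differentiated
under the integral sign, and the mean `M'(θ₂) / M(θ₂)` is the logarithmic derivative of
`s ↦ B((θ₁ + s)/2, (θ₁ - s)/2)`, which `Γ' = Γ ψ` evaluates to `(ψ((θ₁ + θ₂)/2) - ψ((θ₁ - θ₂)/2)) / 2`.
-/

open Real Set Filter Topology ProbabilityTheory
open scoped ENNReal

lemma ofReal_rpow_mul_one_sub_rpow {a b t : ℝ} (ht : t ∈ Ioo 0 1) :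
    ((t ^ (a - 1) * (1 - t) ^ (b - 1) : ℝ) : ℂ) =
      (t : ℂ) ^ ((a : ℂ) - 1) * (1 - (t : ℂ)) ^ ((b : ℂ) - 1) := by
  push_cast [Complex.ofReal_cpow ht.1.le, Complex.ofReal_cpow (sub_nonneg.2 ht.2.le)]
  rfl

lemma integrableOn_rpow_mul_one_sub_rpow {a b : ℝ} (ha : 0 < a) (hb : 0 < b) :
    IntegrableOn (fun t : ℝ => t ^ (a - 1) * (1 - t) ^ (b - 1)) (Ioo 0 1) := by
  have h := Complex.betaIntegral_convergent (u := a) (v := b) (by simpa) (by simpa)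
  rw [intervalIntegrable_iff_integrableOn_Ioo_of_le zero_le_one] at h
  refine IntegrableOn.congr_fun h.re (fun t ht => ?_) measurableSet_Ioo
  simp only [← ofReal_rpow_mul_one_sub_rpow ht, RCLike.re_to_complex, Complex.ofReal_re]

lemma integral_rpow_mul_one_sub_rpow {a b : ℝ} (ha : 0 < a) (hb : 0 < b) :
    ∫ t in Ioo (0 : ℝ) 1, t ^ (a - 1) * (1 - t) ^ (b - 1) = beta a b := by
  rw [beta_eq_betaIntegralReal a b ha hb, Complex.betaIntegral,
    intervalIntegral.integral_of_le zero_le_one, integral_Ioc_eq_integral_Ioo,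
    ← setIntegral_congr_fun measurableSet_Ioo fun t ht => ofReal_rpow_mul_one_sub_rpow ht,
    integral_complex_ofReal, Complex.ofReal_re]

lemma sigmoid_two_mul (x : ℝ) : sigmoid (2 * x) = exp x / (2 * cosh x) := by
  rw [sigmoid_def, cosh_eq]
  field_simp
  rw [add_mul, ← exp_add]
  ring_nf

lemma one_sub_sigmoid_two_mul (x : ℝ) : 1 - sigmoid (2 * x) = exp (-x) / (2 * cosh x) := by
  rw [← sigmoid_neg, ← mul_neg, sigmoid_two_mul, cosh_neg]

lemma sigmoid_two_mul_rpow_mul_one_sub_rpow (x p q : ℝ) :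
    sigmoid (2 * x) ^ p * (1 - sigmoid (2 * x)) ^ q =
      exp ((p - q) * x) / (2 * cosh x) ^ (p + q) := by
  have hc : 0 < 2 * cosh x := by positivity
  rw [one_sub_sigmoid_two_mul, sigmoid_two_mul, div_rpow (exp_pos x).le hc.le,
    div_rpow (exp_pos _).le hc.le, ← exp_mul, ← exp_mul, rpow_add hc]
  field_simp
  rw [← exp_add]
  ring_nf

lemma hasDerivAt_sigmoid_two_mul (x : ℝ) :
    HasDerivAt (fun x => sigmoid (2 * x)) (2 * (sigmoid (2 * x) * (1 - sigmoid (2 * x)))) x :=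
  ((hasDerivAt_sigmoid (2 * x)).comp x ((hasDerivAt_id x).const_mul 2)).congr_deriv (by ring)

lemma abs_two_mul_sigmoid_mul_one_sub (x : ℝ) :
    |2 * (sigmoid x * (1 - sigmoid x))| = 2 * (sigmoid x * (1 - sigmoid x)) :=
  abs_of_pos (mul_pos two_pos (mul_pos (sigmoid_pos x) (sub_pos.2 (sigmoid_lt_one x))))

lemma range_sigmoid_two_mul : range (fun x : ℝ => sigmoid (2 * x)) = Ioo 0 1 := by
  rw [← range_sigmoid]
  exact (mul_left_surjective₀ two_ne_zero).range_comp sigmoid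

section Substitution

variable {E : Type*} [NormedAddCommGroup E] [NormedSpace ℝ E]

lemma integrableOn_Ioo_iff_integrable_sigmoid_two_mul (g : ℝ → E) :
    IntegrableOn g (Ioo 0 1) ↔ Integrable fun x =>
      (2 * (sigmoid (2 * x) * (1 - sigmoid (2 * x)))) • g (sigmoid (2 * x)) := by
  have h := integrableOn_image_iff_integrableOn_abs_deriv_smul MeasurableSet.univ
    (fun x _ => (hasDerivAt_sigmoid_two_mul x).hasDerivWithinAt)
    (sigmoid_strictMono.comp (strictMono_mul_left_of_pos two_pos)).injective.injOn g
  rw [image_univ, range_sigmoid_two_mul, integrableOn_univ] at h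
  simpa only [abs_two_mul_sigmoid_mul_one_sub] using h

lemma integral_Ioo_eq_integral_sigmoid_two_mul (g : ℝ → E) :
    ∫ t in Ioo 0 1, g t = ∫ x,
      (2 * (sigmoid (2 * x) * (1 - sigmoid (2 * x)))) • g (sigmoid (2 * x)) := by
  have h := integral_image_eq_integral_abs_deriv_smul MeasurableSet.univ
    (fun x _ => (hasDerivAt_sigmoid_two_mul x).hasDerivWithinAt)
    (sigmoid_strictMono.comp (strictMono_mul_left_of_pos two_pos)).injective.injOn g
  rw [image_univ, range_sigmoid_two_mul, Measure.restrict_univ] at h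
  simpa only [abs_two_mul_sigmoid_mul_one_sub] using h

end Substitution

lemma sech_rpow_mul_exp_eq_sigmoid_two_mul (θ s x : ℝ) :
    sech x ^ θ * exp (s * x) = 2 ^ (θ - 1) * ((2 * (sigmoid (2 * x) * (1 - sigmoid (2 * x)))) •
      (sigmoid (2 * x) ^ ((θ + s) / 2 - 1) * (1 - sigmoid (2 * x)) ^ ((θ - s) / 2 - 1))) := by
  have hσ := sigmoid_pos (2 * x)
  have hσ' := sub_pos.2 (sigmoid_lt_one (2 * x))
  have hc := cosh_pos x
  have hσθ : sigmoid (2 * x) ^ ((θ + s) / 2) * (1 - sigmoid (2 * x)) ^ ((θ - s) / 2) =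
      exp (s * x) / (2 * cosh x) ^ θ := by
    rw [sigmoid_two_mul_rpow_mul_one_sub_rpow]
    ring_nf
  calc sech x ^ θ * exp (s * x) = 2 ^ θ * (exp (s * x) / (2 * cosh x) ^ θ) := by
        rw [sech, one_div, inv_rpow hc.le, mul_rpow two_pos.le hc.le]
        field_simp
    _ = _ := by
        rw [← hσθ, smul_eq_mul, rpow_sub_one hσ.ne', rpow_sub_one hσ'.ne',
          rpow_sub_one two_ne_zero]
        field_simp

section SechIntegral

variable {θ s : ℝ}

lemma integrable_sech_rpow_mul_exp (h₁ : 0 < θ + s) (h₂ : 0 < θ - s) :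
    Integrable fun x => sech x ^ θ * exp (s * x) := by
  simp_rw [sech_rpow_mul_exp_eq_sigmoid_two_mul θ s]
  refine Integrable.const_mul ((integrableOn_Ioo_iff_integrable_sigmoid_two_mul
    fun t => t ^ ((θ + s) / 2 - 1) * (1 - t) ^ ((θ - s) / 2 - 1)).1 ?_) _
  exact integrableOn_rpow_mul_one_sub_rpow (by linarith) (by linarith)

lemma integral_sech_rpow_mul_exp (h₁ : 0 < θ + s) (h₂ : 0 < θ - s) :
    ∫ x, sech x ^ θ * exp (s * x) = 2 ^ (θ - 1) * beta ((θ + s) / 2) ((θ - s) / 2) := by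
  simp_rw [sech_rpow_mul_exp_eq_sigmoid_two_mul θ s]
  rw [integral_const_mul, ← integral_Ioo_eq_integral_sigmoid_two_mul
    fun t => t ^ ((θ + s) / 2 - 1) * (1 - t) ^ ((θ - s) / 2 - 1),
    integral_rpow_mul_one_sub_rpow (by linarith) (by linarith)]

end SechIntegral

lemma sech_pos (x : ℝ) : 0 < sech x := one_div_pos.2 (cosh_pos x)

@[fun_prop]
lemma measurable_sech : Measurable sech := by
  unfold sech
  fun_prop

noncomputable def sechPowMeasure (θ : ℝ) : Measure ℝ :=
  volume.withDensity fun x => ((sech x ^ θ).toNNReal : ℝ≥0∞)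

section SechPowMeasure

variable {θ : ℝ}

lemma integral_sechPowMeasure (g : ℝ → ℝ) :
    ∫ x, g x ∂sechPowMeasure θ = ∫ x, sech x ^ θ * g x := by
  rw [sechPowMeasure, integral_withDensity_eq_integral_smul (by fun_prop)]
  simp_rw [NNReal.smul_def, Real.coe_toNNReal _ (rpow_nonneg (sech_pos _).le θ), smul_eq_mul]

lemma integrable_sechPowMeasure_iff {g : ℝ → ℝ} :
    Integrable g (sechPowMeasure θ) ↔ Integrable fun x => sech x ^ θ * g x := by
  rw [sechPowMeasure, integrable_withDensity_iff_integrable_smul (by fun_prop)]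
  simp_rw [NNReal.smul_def, Real.coe_toNNReal _ (rpow_nonneg (sech_pos _).le θ), smul_eq_mul]

lemma Ioo_subset_integrableExpSet_sechPowMeasure :
    Ioo (-θ) θ ⊆ integrableExpSet id (sechPowMeasure θ) := fun s hs =>
  integrable_sechPowMeasure_iff.2 <|
    integrable_sech_rpow_mul_exp (by linarith [hs.1]) (by linarith [hs.2])

end SechPowMeasure

lemma hasDerivAt_integral_sech_rpow_mul_exp {θ s : ℝ} (h₁ : 0 < θ + s) (h₂ : 0 < θ - s) :
    HasDerivAt (fun s => ∫ x, sech x ^ θ * exp (s * x))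
      (∫ x, sech x ^ θ * (x * exp (s * x))) s := by
  have hs : s ∈ interior (integrableExpSet id (sechPowMeasure θ)) :=
    interior_mono Ioo_subset_integrableExpSet_sechPowMeasure <| by
      rw [isOpen_Ioo.interior_eq]
      constructor <;> linarith
  convert hasDerivAt_mgf hs using 1
  · funext s
    simp [mgf, integral_sechPowMeasure]
  · simp [integral_sechPowMeasure]

lemma hasDerivAt_Gamma_of_pos {z : ℝ} (hz : 0 < z) :
    HasDerivAt Gamma (Gamma z * digamma z) z := by
  have hd : HasDerivAt Gamma (deriv Gamma z) z :=
    (differentiableAt_Gamma fun m => by linarith [m.cast_nonneg (α := ℝ)]).hasDerivAt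
  have hΓ := (Gamma_pos_of_pos hz).ne'
  rwa [digamma, (hd.log hΓ).deriv, mul_div_cancel₀ _ hΓ]

lemma hasDerivAt_beta_add_sub {θ s : ℝ} (h₁ : 0 < θ + s) (h₂ : 0 < θ - s) :
    HasDerivAt (fun s => beta ((θ + s) / 2) ((θ - s) / 2))
      (beta ((θ + s) / 2) ((θ - s) / 2) *
        ((digamma ((θ + s) / 2) - digamma ((θ - s) / 2)) / 2)) s := by
  have hadd : HasDerivAt (fun s => (θ + s) / 2) (1 / 2) s :=
    ((hasDerivAt_id s).const_add θ).div_const 2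
  have hsub : HasDerivAt (fun s => (θ - s) / 2) (-1 / 2) s :=
    ((hasDerivAt_id s).const_sub θ).div_const 2
  have h := (((hasDerivAt_Gamma_of_pos (by linarith : 0 < (θ + s) / 2)).comp s hadd).mul
    ((hasDerivAt_Gamma_of_pos (by linarith : 0 < (θ - s) / 2)).comp s hsub)).div_const (Gamma θ)
  have hsum : ∀ s : ℝ, (θ + s) / 2 + (θ - s) / 2 = θ := fun s => by ring
  simp only [beta, hsum]
  exact h.congr_deriv (by simp only [Function.comp_apply]; ring)

lemma betaLogisticPDF_eq (θ1 θ2 x : ℝ) :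
    betaLogisticPDF θ1 θ2 x =
      sech x ^ θ1 * exp (θ2 * x) / (2 ^ (θ1 - 1) * beta ((θ1 + θ2) / 2) ((θ1 - θ2) / 2)) := by
  rw [betaLogisticPDF, beta, show (θ1 + θ2) / 2 + (θ1 - θ2) / 2 = θ1 by ring,
    show 1 - θ1 = -(θ1 - 1) by ring, rpow_neg two_pos.le]
  ring

/-- The mean of the beta-logistic distribution is
`(1/2) (ψ((θ¹+θ²)/2) − ψ((θ¹−θ²)/2))`. -/
theorem betaLogistic_mean (θ1 θ2 : ℝ) (h1 : 0 < θ1 + θ2) (h2 : 0 < θ1 - θ2) :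
    (∫ x : ℝ, x * betaLogisticPDF θ1 θ2 x) =
      (1 / 2) * (digamma ((θ1 + θ2) / 2) - digamma ((θ1 - θ2) / 2)) := by
  have hM : (fun s => ∫ x, sech x ^ θ1 * exp (s * x)) =ᶠ[𝓝 θ2]
      fun s => 2 ^ (θ1 - 1) * beta ((θ1 + s) / 2) ((θ1 - s) / 2) := by
    filter_upwards [Ioo_mem_nhds (by linarith : -θ1 < θ2) (by linarith : θ2 < θ1)] with s hs
    exact integral_sech_rpow_mul_exp (by linarith [hs.1]) (by linarith [hs.2])
  have hderiv := (hasDerivAt_integral_sech_rpow_mul_exp h1 h2).unique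
    (((hasDerivAt_beta_add_sub h1 h2).const_mul _).congr_of_eventuallyEq hM)
  calc ∫ x, x * betaLogisticPDF θ1 θ2 x
      = (∫ x, sech x ^ θ1 * (x * exp (θ2 * x))) /
          (2 ^ (θ1 - 1) * beta ((θ1 + θ2) / 2) ((θ1 - θ2) / 2)) := by
        rw [← integral_div]
        congr 1 with x
        rw [betaLogisticPDF_eq]
        ring
    _ = _ := by
        have hB := beta_pos (by linarith : 0 < (θ1 + θ2) / 2) (by linarith : 0 < (θ1 - θ2) / 2)
        rw [hderiv]
        field_simp
end

section
/- For the Euler case θ¹ = 1, θ² = 0 of the beta-logistic family (so u = v = 1/2), the α-scalar curvature R^{(α)} = (1−α²)·[ψ'(θ¹)ψ''(u)ψ''(v) − ψ''(θ¹)(ψ'(u)ψ''(v) + ψ'(v)ψ''(u))]/(2𝒢²), where 𝒢 = ψ'(u)ψ'(v) − ψ'(θ¹)(ψ'(u)+ψ'(v)), equals 336·(1−α²)·ζ(3)² / π⁶ for every real α. -/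
/-!
Differentiating the Gauss product `log Γ x = lim (x log n + log n! - ∑_{m ≤ n} log (x + m))`
termwise gives `ψ'(x) = ∑ 1 / (x + m)²` and `ψ''(x) = -2 ∑ 1 / (x + m)³` for `x > 0`.
Hence `ψ'(1) = ζ(2) = π² / 6` and `ψ''(1) = -2 ζ(3)`, and splitting `∑ 1 / (1 + n)ᵏ` into odd
and even `n` gives `ψ'(1/2) = 3 ψ'(1)` and `ψ''(1/2) = 7 ψ''(1)`. With `a = ψ'(1)`, `b = ψ''(1)`
the numerator of the curvature is `7ab²` and `𝒢 = 3a²`, so `R = 7(1 - α²)b² / (18a³)`.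
-/

/-- The trigamma function `ψ'(z) = d²/dz² log Γ(z)`. -/
noncomputable def trigamma (z : ℝ) : ℝ := iteratedDeriv 2 (fun x => Real.log (Real.Gamma x)) z

/-- The tetragamma function `ψ''(z) = d³/dz³ log Γ(z)`. -/
noncomputable def tetragamma (z : ℝ) : ℝ := iteratedDeriv 3 (fun x => Real.log (Real.Gamma x)) z

open Real Filter Topology Set

lemma summable_div_nat_add_one_sq (C : ℝ) : Summable fun m : ℕ => C / ((m : ℝ) + 1) ^ 2 := by
  have h := (summable_nat_add_iff 1).mpr (Real.summable_one_div_nat_pow.mpr one_lt_two)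
  exact (h.mul_left C).congr fun m => by push_cast; ring

lemma abs_log_add_one_sub_log_sub_inv_le {b c y : ℝ} (hc : 0 < c) (hy : 0 ≤ y) (hyb : y ≤ b) :
    |log (c + 1) - log c - (y + c)⁻¹| ≤ (b + 1) / c ^ 2 := by
  have hlog : log (c + 1) - log c = log ((c + 1) / c) := (log_div (by positivity) hc.ne').symm
  have hL₁ : log (c + 1) - log c ≤ c⁻¹ := by
    rw [hlog]; linarith [log_le_sub_one_of_pos (x := (c + 1) / c) (by positivity),
      show (c + 1) / c - 1 = c⁻¹ by field_simp; ring]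
  have hL₂ : (c + 1)⁻¹ ≤ log (c + 1) - log c := by
    rw [hlog]; linarith [one_sub_inv_le_log_of_pos (x := (c + 1) / c) (by positivity),
      show 1 - ((c + 1) / c)⁻¹ = (c + 1)⁻¹ by field_simp; ring]
  have hI₁ : (y + c)⁻¹ ≤ c⁻¹ := inv_anti₀ hc (by linarith)
  have hI₂ : (b + c)⁻¹ ≤ (y + c)⁻¹ := inv_anti₀ (by linarith) (by linarith)
  have hgap₁ : c⁻¹ - (b + c)⁻¹ ≤ (b + 1) / c ^ 2 := by
    rw [inv_sub_inv hc.ne' (by linarith : b + c ≠ 0), div_le_div_iff₀ (by nlinarith) (by positivity)]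
    nlinarith [mul_nonneg (mul_nonneg hc.le hc.le) (by linarith : (0:ℝ) ≤ b)]
  have hgap₂ : c⁻¹ - (c + 1)⁻¹ ≤ (b + 1) / c ^ 2 := by
    rw [inv_sub_inv hc.ne' (by linarith : c + 1 ≠ 0), div_le_div_iff₀ (by positivity) (by positivity)]
    nlinarith [mul_nonneg (mul_nonneg hc.le hc.le) (by linarith : (0:ℝ) ≤ b)]
  rw [abs_le]
  constructor <;> linarith

/-- The Gauss product for `log Γ x + log x`, with its `x log n` telescoped into the terms. -/
noncomputable def logGammaTerm (m : ℕ) (x : ℝ) : ℝ :=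
  x * (log ((m : ℝ) + 2) - log ((m : ℝ) + 1)) - log (x + ((m : ℝ) + 1)) + log ((m : ℝ) + 1)

noncomputable def digammaTerm (m : ℕ) (x : ℝ) : ℝ :=
  log ((m : ℝ) + 2) - log ((m : ℝ) + 1) - (x + ((m : ℝ) + 1))⁻¹

lemma logGammaTerm_one (m : ℕ) : logGammaTerm m 1 = 0 := by
  rw [logGammaTerm, show (1 : ℝ) + ((m : ℝ) + 1) = (m : ℝ) + 2 by ring]
  ring

lemma hasDerivAt_logGammaTerm (m : ℕ) {y : ℝ} (hy : y + ((m : ℝ) + 1) ≠ 0) :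
    HasDerivAt (logGammaTerm m) (digammaTerm m y) y := by
  have h := (((hasDerivAt_id y).mul_const (log ((m : ℝ) + 2) - log ((m : ℝ) + 1))).sub
    (((hasDerivAt_id y).add_const ((m : ℝ) + 1)).log hy)).add_const (log ((m : ℝ) + 1))
  refine h.congr_deriv ?_
  simp [digammaTerm, one_div]

lemma hasDerivAt_digammaTerm (m : ℕ) {y : ℝ} (hy : y + ((m : ℝ) + 1) ≠ 0) :
    HasDerivAt (digammaTerm m) ((y + ((m : ℝ) + 1)) ^ 2)⁻¹ y := by
  have h := (hasDerivAt_const y (log ((m : ℝ) + 2) - log ((m : ℝ) + 1))).sub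
    (((hasDerivAt_id y).add_const ((m : ℝ) + 1)).inv hy)
  refine h.congr_deriv ?_
  simp [neg_div]

lemma hasDerivAt_inv_add_sq (m : ℕ) {y : ℝ} (hy : y + ((m : ℝ) + 1) ≠ 0) :
    HasDerivAt (fun x => ((x + ((m : ℝ) + 1)) ^ 2)⁻¹) (-2 * ((y + ((m : ℝ) + 1)) ^ 3)⁻¹) y := by
  have h := (((hasDerivAt_id y).add_const ((m : ℝ) + 1)).pow 2).inv (pow_ne_zero 2 hy)
  refine h.congr_deriv ?_
  simp only [id, Pi.pow_apply]
  field_simp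
  ring

lemma abs_digammaTerm_le (m : ℕ) {b y : ℝ} (hy : 0 ≤ y) (hyb : y ≤ b) :
    |digammaTerm m y| ≤ (b + 1) / ((m : ℝ) + 1) ^ 2 := by
  have h := abs_log_add_one_sub_log_sub_inv_le (c := (m : ℝ) + 1) (by positivity) hy hyb
  rwa [show (m : ℝ) + 1 + 1 = (m : ℝ) + 2 by ring] at h

lemma abs_inv_add_sq_le (m : ℕ) {y : ℝ} (hy : 0 ≤ y) :
    |((y + ((m : ℝ) + 1)) ^ 2)⁻¹| ≤ 1 / ((m : ℝ) + 1) ^ 2 := by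
  rw [abs_of_pos (by positivity), one_div]
  exact inv_anti₀ (by positivity) (pow_le_pow_left₀ (by positivity) (by linarith) 2)

lemma abs_neg_two_mul_inv_add_cube_le (m : ℕ) {y : ℝ} (hy : 0 ≤ y) :
    |-2 * ((y + ((m : ℝ) + 1)) ^ 3)⁻¹| ≤ 2 / ((m : ℝ) + 1) ^ 2 := by
  have hm : (1 : ℝ) ≤ (m : ℝ) + 1 := by linarith [m.cast_nonneg (α := ℝ)]
  rw [abs_mul, abs_neg, abs_two, abs_of_pos (by positivity), div_eq_mul_inv]
  gcongr
  calc ((m : ℝ) + 1) ^ 2 ≤ ((m : ℝ) + 1) ^ 3 := pow_le_pow_right₀ hm (by norm_num)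
    _ ≤ (y + ((m : ℝ) + 1)) ^ 3 := pow_le_pow_left₀ (by positivity) (by linarith) 3

lemma sum_range_logGammaTerm (x : ℝ) (n : ℕ) :
    ∑ m ∈ Finset.range n, logGammaTerm m x =
      BohrMollerup.logGammaSeq x n + log x + x * (log ((n : ℝ) + 1) - log n) := by
  have htelescope : ∑ m ∈ Finset.range n, (log ((m : ℝ) + 2) - log ((m : ℝ) + 1)) =
      log ((n : ℝ) + 1) := by
    simpa [add_assoc, one_add_one_eq_two] using
      Finset.sum_range_sub (fun k : ℕ => log ((k : ℝ) + 1)) n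
  have hfactorial : log (n.factorial : ℝ) = ∑ m ∈ Finset.range n, log ((m : ℝ) + 1) := by
    rw [← Finset.prod_range_add_one_eq_factorial, Nat.cast_prod,
      log_prod fun i _ => by positivity]
    push_cast
    rfl
  have hsplit : ∑ m ∈ Finset.range (n + 1), log (x + m) =
      ∑ m ∈ Finset.range n, log (x + ((m : ℝ) + 1)) + log x := by
    simp [Finset.sum_range_succ']
  rw [BohrMollerup.logGammaSeq, hsplit, hfactorial]
  simp only [logGammaTerm]
  rw [Finset.sum_add_distrib, Finset.sum_sub_distrib, ← Finset.mul_sum, htelescope]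
  ring

lemma summable_logGammaTerm {x : ℝ} (hx : 0 < x) : Summable fun m => logGammaTerm m x :=
  summable_of_summable_hasDerivAt_of_isPreconnected (summable_div_nat_add_one_sq (x + 1 + 1))
    isOpen_Ioo (convex_Ioo 0 (x + 1)).isPreconnected
    (fun m _ hy => hasDerivAt_logGammaTerm m (by linarith [hy.1, m.cast_nonneg (α := ℝ)]))
    (fun m _ hy => abs_digammaTerm_le m hy.1.le hy.2.le)
    (by norm_num [hx] : (1 : ℝ) ∈ Ioo 0 (x + 1)) (by simp [logGammaTerm_one])
    (by constructor <;> linarith : x ∈ Ioo 0 (x + 1))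

lemma hasSum_logGammaTerm {x : ℝ} (hx : 0 < x) :
    HasSum (fun m => logGammaTerm m x) (log (Gamma x) + log x) := by
  refine (summable_logGammaTerm hx).hasSum_iff_tendsto_nat.mpr ?_
  have h := ((BohrMollerup.tendsto_log_gamma hx).add_const (log x)).add
    (tendsto_log_nat_add_one_sub_log.const_mul x)
  rw [mul_zero, add_zero] at h
  simpa only [sum_range_logGammaTerm] using h

lemma hasDerivAt_tsum_logGammaTerm {x : ℝ} (hx : 0 < x) :
    HasDerivAt (fun y => ∑' m, logGammaTerm m y) (∑' m, digammaTerm m x) x :=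
  hasDerivAt_tsum_of_isPreconnected (summable_div_nat_add_one_sq (x + 1 + 1))
    isOpen_Ioo (convex_Ioo 0 (x + 1)).isPreconnected
    (fun m _ hy => hasDerivAt_logGammaTerm m (by linarith [hy.1, m.cast_nonneg (α := ℝ)]))
    (fun m _ hy => abs_digammaTerm_le m hy.1.le hy.2.le)
    (by norm_num [hx] : (1 : ℝ) ∈ Ioo 0 (x + 1)) (by simp [logGammaTerm_one])
    (by constructor <;> linarith : x ∈ Ioo 0 (x + 1))

lemma hasDerivAt_tsum_digammaTerm {x : ℝ} (hx : 0 < x) :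
    HasDerivAt (fun y => ∑' m, digammaTerm m y) (∑' m : ℕ, ((x + ((m : ℝ) + 1)) ^ 2)⁻¹) x :=
  hasDerivAt_tsum_of_isPreconnected (summable_div_nat_add_one_sq 1)
    isOpen_Ioi (convex_Ioi 0).isPreconnected
    (fun m y (hy : 0 < y) => hasDerivAt_digammaTerm m (by positivity))
    (fun m y (hy : 0 < y) => abs_inv_add_sq_le m hy.le)
    (mem_Ioi.mpr one_pos)
    (.of_norm_bounded (summable_div_nat_add_one_sq (1 + 1))
      fun m => abs_digammaTerm_le m zero_le_one le_rfl)
    hx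

lemma hasDerivAt_tsum_inv_add_sq {x : ℝ} (hx : 0 < x) :
    HasDerivAt (fun y => ∑' m : ℕ, ((y + ((m : ℝ) + 1)) ^ 2)⁻¹)
      (∑' m : ℕ, -2 * ((x + ((m : ℝ) + 1)) ^ 3)⁻¹) x :=
  hasDerivAt_tsum_of_isPreconnected (summable_div_nat_add_one_sq 2)
    isOpen_Ioi (convex_Ioi 0).isPreconnected
    (fun m y (hy : 0 < y) => hasDerivAt_inv_add_sq m (by positivity))
    (fun m y (hy : 0 < y) => abs_neg_two_mul_inv_add_cube_le m hy.le)
    (mem_Ioi.mpr one_pos)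
    (.of_norm_bounded (summable_div_nat_add_one_sq 1)
      fun m => abs_inv_add_sq_le m zero_le_one)
    hx

lemma eqOn_iteratedDeriv_one_log_Gamma :
    EqOn (iteratedDeriv 1 fun x => log (Gamma x)) (fun x => ∑' m, digammaTerm m x - x⁻¹)
      (Ioi 0) := by
  intro x (hx : 0 < x)
  have hlogGamma : (fun y => log (Gamma y)) =ᶠ[𝓝 x] fun y => ∑' m, logGammaTerm m y - log y := by
    filter_upwards [Ioi_mem_nhds hx] with y (hy : 0 < y)
    rw [(hasSum_logGammaTerm hy).tsum_eq, add_sub_cancel_right]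
  rw [iteratedDeriv_one, hlogGamma.deriv_eq]
  exact ((hasDerivAt_tsum_logGammaTerm hx).sub (hasDerivAt_log hx.ne')).deriv

lemma eqOn_iteratedDeriv_two_log_Gamma :
    EqOn (iteratedDeriv 2 fun x => log (Gamma x))
      (fun x => ∑' m : ℕ, ((x + ((m : ℝ) + 1)) ^ 2)⁻¹ + (x ^ 2)⁻¹) (Ioi 0) := by
  intro x (hx : 0 < x)
  rw [iteratedDeriv_succ, (eqOn_iteratedDeriv_one_log_Gamma.eventuallyEq_of_mem
    (Ioi_mem_nhds hx)).deriv_eq]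
  refine ((hasDerivAt_tsum_digammaTerm hx).sub (hasDerivAt_inv hx.ne')).deriv.trans ?_
  ring

lemma eqOn_iteratedDeriv_three_log_Gamma :
    EqOn (iteratedDeriv 3 fun x => log (Gamma x))
      (fun x => ∑' m : ℕ, -2 * ((x + ((m : ℝ) + 1)) ^ 3)⁻¹ - 2 * (x ^ 3)⁻¹) (Ioi 0) := by
  intro x (hx : 0 < x)
  rw [iteratedDeriv_succ, (eqOn_iteratedDeriv_two_log_Gamma.eventuallyEq_of_mem
    (Ioi_mem_nhds hx)).deriv_eq]
  refine ((hasDerivAt_tsum_inv_add_sq hx).add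
    ((hasDerivAt_pow 2 x).inv (pow_ne_zero 2 hx.ne'))).deriv.trans ?_
  field_simp
  ring

lemma hasSum_trigamma {x : ℝ} (hx : 0 < x) :
    HasSum (fun m : ℕ => 1 / (x + m) ^ 2) (trigamma x) := by
  have hs : Summable fun m : ℕ => ((x + ((m : ℝ) + 1)) ^ 2)⁻¹ :=
    .of_norm_bounded (summable_div_nat_add_one_sq 1) fun m => abs_inv_add_sq_le m hx.le
  have h := HasSum.zero_add (f := fun m : ℕ => 1 / (x + m) ^ 2) <|
    hs.hasSum.congr_fun fun m => by push_cast; rw [one_div]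
  rw [trigamma, eqOn_iteratedDeriv_two_log_Gamma hx]
  convert h using 1
  simp [add_comm]

lemma hasSum_tetragamma {x : ℝ} (hx : 0 < x) :
    HasSum (fun m : ℕ => -2 / (x + m) ^ 3) (tetragamma x) := by
  have hs : Summable fun m : ℕ => -2 * ((x + ((m : ℝ) + 1)) ^ 3)⁻¹ :=
    .of_norm_bounded (summable_div_nat_add_one_sq 2) fun m =>
      abs_neg_two_mul_inv_add_cube_le m hx.le
  have h := HasSum.zero_add (f := fun m : ℕ => -2 / (x + m) ^ 3) <|
    hs.hasSum.congr_fun fun m => by push_cast; rw [div_eq_mul_inv]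
  rw [tetragamma, eqOn_iteratedDeriv_three_log_Gamma hx]
  convert h using 1
  simp [div_eq_mul_inv]
  ring

lemma hasSum_div_half_add_pow {k : ℕ} {c s : ℝ}
    (hs : HasSum (fun n : ℕ => c / (1 + n) ^ k) s) :
    HasSum (fun n : ℕ => c / (1 / 2 + n) ^ k) ((2 ^ k - 1) * s) := by
  set F : ℕ → ℝ := fun n => c / (1 + n) ^ k
  -- Odd `n` give `2⁻ᵏ` times the whole series, even `n` give `2⁻ᵏ` times the terms at `1/2`.
  have hodd : HasSum (fun n => F (2 * n + 1)) (s / 2 ^ k) :=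
    (hs.div_const (2 ^ k)).congr_fun fun n => by
      simp only [F]; push_cast; rw [div_div, ← mul_pow]; ring_nf
  have heven : HasSum (fun n => F (2 * n)) (s - s / 2 ^ k) := by
    obtain ⟨t, ht⟩ := hs.summable.comp_injective (mul_right_injective₀ (two_ne_zero (α := ℕ)))
    rw [show s - s / 2 ^ k = t by linarith [hs.unique (ht.even_add_odd hodd)]]
    exact ht
  rw [show (2 ^ k - 1) * s = 2 ^ k * (s - s / 2 ^ k) by field_simp]
  refine (heven.mul_left (2 ^ k)).congr_fun fun n => ?_
  simp only [F]
  push_cast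
  rw [show (1 / 2 + n : ℝ) = (1 + 2 * n) / 2 by ring, div_pow]
  field_simp

lemma trigamma_one : trigamma 1 = π ^ 2 / 6 := by
  have h : HasSum (fun n : ℕ => 1 / ((n + 1 : ℕ) : ℝ) ^ 2) (π ^ 2 / 6) := by
    simpa using (hasSum_nat_add_iff' 1).mpr hasSum_zeta_two
  exact (hasSum_trigamma one_pos).unique (h.congr_fun fun n => by push_cast; ring)

lemma tetragamma_one : tetragamma 1 = -2 * ∑' n : ℕ, 1 / ((n : ℝ) + 1) ^ 3 := by
  rw [← (hasSum_tetragamma one_pos).tsum_eq, ← tsum_mul_left]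
  congr 1 with n
  ring

lemma trigamma_one_half : trigamma (1 / 2) = 3 * trigamma 1 :=
  (hasSum_trigamma (by norm_num)).unique (hasSum_div_half_add_pow (hasSum_trigamma one_pos))
    |>.trans (by norm_num)

lemma tetragamma_one_half : tetragamma (1 / 2) = 7 * tetragamma 1 :=
  (hasSum_tetragamma (by norm_num)).unique (hasSum_div_half_add_pow (hasSum_tetragamma one_pos))
    |>.trans (by norm_num)

/-- In the Euler case `θ¹ = 1`, `θ² = 0` (so `u = v = 1/2`) of the beta-logistic family,
the α-scalar curvature
`R^{(α)} = (1−α²)(ψ'(1)ψ''(1/2)ψ''(1/2) − ψ''(1)(ψ'(1/2)ψ''(1/2) + ψ'(1/2)ψ''(1/2)))/(2𝒢²)`,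
with `𝒢 = ψ'(1/2)ψ'(1/2) − ψ'(1)(ψ'(1/2)+ψ'(1/2))`, equals `336(1−α²)ζ(3)²/π⁶`. -/
theorem euler_case_scalar_curvature (α z : ℝ)
    (hz : z = ∑' n : ℕ, 1 / ((n : ℝ) + 1) ^ 3)
    (𝒢 : ℝ)
    (hgg : 𝒢 = trigamma (1 / 2) * trigamma (1 / 2) -
      trigamma 1 * (trigamma (1 / 2) + trigamma (1 / 2))) :
    (1 - α ^ 2) *
        (trigamma 1 * tetragamma (1 / 2) * tetragamma (1 / 2) -
          tetragamma 1 *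
            (trigamma (1 / 2) * tetragamma (1 / 2) + trigamma (1 / 2) * tetragamma (1 / 2))) /
        (2 * 𝒢 ^ 2) =
      336 * (1 - α ^ 2) * z ^ 2 / Real.pi ^ 6 := by
  rw [hgg, trigamma_one_half, tetragamma_one_half, trigamma_one, tetragamma_one, ← hz]
  field_simp
  ring
end
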